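/- In an F-linear symmetric monoidal category C where F is a field of characteristic zero, the set ⊗_nil(a,b) = {g : a → b | g^{⊗n} = 0 for some n > 0} is closed under addition, and hence is an F-linear subspace of Hom_C(a,b). -/

import Mathlib

open CategoryTheory CategoryTheory.MonoidalCategory

universe v u

variable {C : Type u} [Category.{v} C] [MonoidalCategory C]

/-- The `n`-fold tensor power of an object. -/
def objPow (a : C) : ℕ → C
  | 0 => 𝟙_ C
  | n + 1 => objPow a n ⊗ a

/-- The `n`-fold tensor power of a morphism. -/
def homPow {a b : C} (g : a ⟶ b) : (n : ℕ) → (objPow a n ⟶ objPow b n)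
  | 0 => 𝟙 _
  | n + 1 => homPow g n ⊗ₘ g

/-- `Sand f w`: `w` factors as `u ≫ f ≫ v`. -/
def Sand {X Y X' Y' : C} (f : X ⟶ Y) (w : X' ⟶ Y') : Prop :=
  ∃ u v, w = u ≫ f ≫ v

lemma Sand.refl {X Y : C} (f : X ⟶ Y) : Sand f f :=
  ⟨𝟙 _, 𝟙 _, by simp⟩

lemma Sand.trans {X Y X' Y' X'' Y'' : C} {f : X ⟶ Y} {w : X' ⟶ Y'} {z : X'' ⟶ Y''}
    (h1 : Sand f w) (h2 : Sand w z) : Sand f z := by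
  obtain ⟨u, v, rfl⟩ := h1
  obtain ⟨u', v', rfl⟩ := h2
  exact ⟨u' ≫ u, v ≫ v', by simp⟩

lemma Sand.zero [Preadditive C] {X Y X' Y' : C} {f : X ⟶ Y} {w : X' ⟶ Y'}
    (h : Sand f w) (hf : f = 0) : w = 0 := by
  obtain ⟨u, v, rfl⟩ := h
  simp [hf]

lemma Sand.whiskerRight {X Y X' Y' P Q : C} {f : X ⟶ Y} {w : X' ⟶ Y'}
    (h : Sand f w) (g : P ⟶ Q) : Sand (f ⊗ₘ g) (w ⊗ₘ g) := by
  obtain ⟨u, v, rfl⟩ := h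
  refine ⟨u ⊗ₘ 𝟙 P, v ⊗ₘ 𝟙 Q, ?_⟩
  rw [tensorHom_comp_tensorHom, tensorHom_comp_tensorHom]
  simp

/-- Move the rightmost factor of a triple tensor to the middle slot, as a sandwich. -/
lemma sand_swap [BraidedCategory C] {A₁ A₂ B₁ B₂ C₁ C₂ : C}
    (A : A₁ ⟶ A₂) (B : B₁ ⟶ B₂) (G : C₁ ⟶ C₂) :
    Sand ((A ⊗ₘ G) ⊗ₘ B) ((A ⊗ₘ B) ⊗ₘ G) := by
  refine ⟨(α_ _ _ _).hom ≫ (𝟙 A₁ ⊗ₘ (β_ B₁ C₁).hom) ≫ (α_ _ _ _).inv,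
          (α_ _ _ _).hom ≫ (𝟙 A₂ ⊗ₘ (β_ B₂ C₂).inv) ≫ (α_ _ _ _).inv, ?_⟩
  have h1 : (A ⊗ₘ B) ⊗ₘ G = (α_ _ _ _).hom ≫ (A ⊗ₘ (B ⊗ₘ G)) ≫ (α_ _ _ _).inv := by
    rw [← associator_naturality_assoc, Iso.hom_inv_id, Category.comp_id]
  have h2 : B ⊗ₘ G = (β_ B₁ C₁).hom ≫ (G ⊗ₘ B) ≫ (β_ B₂ C₂).inv := by
    rw [← BraidedCategory.braiding_naturality_assoc]; simp
  have h3 : A ⊗ₘ (G ⊗ₘ B) = (α_ _ _ _).inv ≫ ((A ⊗ₘ G) ⊗ₘ B) ≫ (α_ _ _ _).hom := by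
    rw [← associator_inv_naturality_assoc, Iso.inv_hom_id, Category.comp_id]
  rw [h1, h2]
  have h4 : A ⊗ₘ ((β_ B₁ C₁).hom ≫ (G ⊗ₘ B) ≫ (β_ B₂ C₂).inv)
      = (𝟙 A₁ ⊗ₘ (β_ B₁ C₁).hom) ≫ (A ⊗ₘ (G ⊗ₘ B)) ≫ (𝟙 A₂ ⊗ₘ (β_ B₂ C₂).inv) := by
    rw [tensorHom_comp_tensorHom, tensorHom_comp_tensorHom]; simp
  rw [h4, h3]
  simp

lemma sand_assoc {A₁ A₂ B₁ B₂ C₁ C₂ : C} (A : A₁ ⟶ A₂) (B : B₁ ⟶ B₂) (G : C₁ ⟶ C₂) :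
    Sand (A ⊗ₘ (B ⊗ₘ G)) ((A ⊗ₘ B) ⊗ₘ G) := by
  refine ⟨(α_ _ _ _).hom, (α_ _ _ _).inv, ?_⟩
  rw [← associator_naturality_assoc, Iso.hom_inv_id, Category.comp_id]

lemma homPow_comp [Preadditive C] {a b c : C} (f : a ⟶ b) (g : b ⟶ c) (n : ℕ) :
    homPow (f ≫ g) n = homPow f n ≫ homPow g n := by
  induction n with
  | zero => simp [homPow]; exact (Category.comp_id _).symm
  | succ n ih => simp [homPow, ih]; exact (tensorHom_comp_tensorHom _ _ _ _).symm

lemma homPow_zero_of_le [Preadditive C] [MonoidalPreadditive C] {a b : C} {g : a ⟶ b}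
    {m n : ℕ} (hm : homPow g m = 0) (h : m ≤ n) : homPow g n = 0 := by
  induction n with
  | zero => exact Nat.le_zero.mp h ▸ hm
  | succ n ih =>
    rcases Nat.lt_or_ge m (n+1) with h' | h'
    · have := ih (by omega)
      show homPow g n ⊗ₘ g = 0
      rw [this, MonoidalPreadditive.zero_tensor]
    · have : m = n + 1 := by omega
      exact this ▸ hm

section Main

variable [Preadditive C] [SymmetricCategory C] [MonoidalPreadditive C] {a b : C}

/-- Generators: morphisms sandwiching `homPow g k ⊗ homPow h l` with `k + l = N`. -/
def gen (g h : a ⟶ b) (N : ℕ) : Set (objPow a N ⟶ objPow b N) :=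
  {w | ∃ k l, k + l = N ∧ Sand (homPow g k ⊗ₘ homPow h l) w}

lemma homPow_add_mem (g h : a ⟶ b) (N : ℕ) :
    homPow (g + h) N ∈ AddSubmonoid.closure (gen g h N) := by
  induction N with
  | zero =>
    apply AddSubmonoid.subset_closure
    refine ⟨0, 0, rfl, (λ_ (𝟙_ C)).inv, (λ_ (𝟙_ C)).hom, ?_⟩
    show 𝟙 _ = _
    simp [homPow]
    show 𝟙 (𝟙_ C) = (λ_ (𝟙_ C)).inv ≫ (𝟙 (𝟙_ C) ⊗ₘ 𝟙 (𝟙_ C)) ≫ (λ_ (𝟙_ C)).hom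
    simp
  | succ N ih =>
    have key : ∀ x ∈ AddSubmonoid.closure (gen g h N),
        (x ⊗ₘ g) + (x ⊗ₘ h) ∈ AddSubmonoid.closure (gen g h (N+1)) := by
      intro x hx
      induction hx using AddSubmonoid.closure_induction with
      | mem w hw =>
        obtain ⟨k, l, hkl, hs⟩ := hw
        apply add_mem
        · apply AddSubmonoid.subset_closure
          refine ⟨k + 1, l, by omega, ?_⟩
          have h1 : Sand ((homPow g k ⊗ₘ homPow h l) ⊗ₘ g) (w ⊗ₘ g) := hs.whiskerRight g
          have h2 : Sand ((homPow g k ⊗ₘ g) ⊗ₘ homPow h l) ((homPow g k ⊗ₘ homPow h l) ⊗ₘ g) :=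
            sand_swap _ _ _
          exact (h2.trans h1 : _)
        · apply AddSubmonoid.subset_closure
          refine ⟨k, l + 1, by omega, ?_⟩
          have h1 : Sand ((homPow g k ⊗ₘ homPow h l) ⊗ₘ h) (w ⊗ₘ h) := hs.whiskerRight h
          have h2 : Sand (homPow g k ⊗ₘ (homPow h l ⊗ₘ h)) ((homPow g k ⊗ₘ homPow h l) ⊗ₘ h) :=
            sand_assoc _ _ _
          exact (h2.trans h1 : _)
      | zero =>
        simp only [MonoidalPreadditive.zero_tensor, add_zero]
        exact zero_mem _
      | add x y hx hy ihx ihy =>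
        have : ((x + y) ⊗ₘ g) + ((x + y) ⊗ₘ h)
            = ((x ⊗ₘ g) + (x ⊗ₘ h)) + ((y ⊗ₘ g) + (y ⊗ₘ h)) := by
          rw [MonoidalPreadditive.add_tensor, MonoidalPreadditive.add_tensor]; abel
        rw [this]
        exact add_mem ihx ihy
    have : homPow (g + h) (N + 1)
        = (homPow (g + h) N ⊗ₘ g) + (homPow (g + h) N ⊗ₘ h) := by
      show homPow (g + h) N ⊗ₘ (g + h) = _
      rw [MonoidalPreadditive.tensor_add]
    rw [this]
    exact key _ ih

end Main

/-- In an `F`-linear symmetric monoidal category over a field `F` of characteristic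
zero, the smash-nilpotent morphisms `⊗ₘ_nil(a,b) = {g | g^{⊗ₘn} = 0 for some n > 0}`
are closed under addition, and indeed form an `F`-linear subspace of `Hom(a,b)`. -/
theorem tensorNil_subspace {F : Type*} [Field F] [CharZero F]
    {C : Type u} [Category.{v} C] [Preadditive C] [CategoryTheory.Linear F C]
    [MonoidalCategory C] [SymmetricCategory C] [MonoidalPreadditive C]
    (a b : C) :
    (∀ g h : a ⟶ b, (∃ n > 0, homPow g n = 0) → (∃ n > 0, homPow h n = 0) →
      ∃ n > 0, homPow (g + h) n = 0) ∧
    ∃ S : Submodule F (a ⟶ b), (S : Set (a ⟶ b)) = {g | ∃ n > 0, homPow g n = 0} := by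
  have hadd : ∀ g h : a ⟶ b, (∃ n > 0, homPow g n = 0) → (∃ n > 0, homPow h n = 0) →
      ∃ n > 0, homPow (g + h) n = 0 := by
    intro g h ⟨m, hm, hgm⟩ ⟨n, hn, hhn⟩
    refine ⟨m + n, by omega, ?_⟩
    have hmem := homPow_add_mem g h (m + n)
    have hgen : gen g h (m + n) ⊆ (⊥ : AddSubmonoid (objPow a (m+n) ⟶ objPow b (m+n))) := by
      rintro w ⟨k, l, hkl, hs⟩
      have hzero : homPow g k ⊗ₘ homPow h l = 0 := by
        rcases le_or_gt m k with hk | hk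
        · rw [homPow_zero_of_le hgm hk, MonoidalPreadditive.zero_tensor]
        · have hl : n ≤ l := by omega
          rw [homPow_zero_of_le hhn hl, MonoidalPreadditive.tensor_zero]
      simpa using hs.zero hzero
    have := (AddSubmonoid.closure_le.mpr hgen) hmem
    simpa using this
  refine ⟨hadd, ?_⟩
  refine ⟨⟨⟨⟨{g | ∃ n > 0, homPow g n = 0}, ?_⟩, ?_⟩, ?_⟩, rfl⟩
  · intro g h hg hh; exact hadd g h hg hh
  · exact ⟨1, one_pos, by show (𝟙 _ : _) ⊗ₘ (0 : a ⟶ b) = 0; simp⟩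
  · rintro c g ⟨n, hn, hgn⟩
    refine ⟨n, hn, ?_⟩
    have : c • g = (c • 𝟙 a) ≫ g := by rw [Linear.smul_comp, Category.id_comp]
    rw [this, homPow_comp, hgn, Limits.comp_zero]
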